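/- arXiv:1204.0734 — 2 statements merged into one kernel-verified Lean document; each statement's English description precedes it below -/
import Mathlib

section
/- Let G = (V, E) be a graph and ∇G its suspension (obtained by adding an apex node 0 adjacent to all nodes of G). Then gd(∇G) = gd(G) + 1. -/
/-!
Upper bound: subtracting from a psd matrix `X` on `V ∪ {0}` the rank-one matrix
`X₀₀⁻¹ · x xᵀ`, where `x` is the apex row, leaves a psd matrix whose apex row and column vanish
(the Schur complement of `X₀₀`, padded with zeros). Replace that Schur complement by a psd matrix
of rank at most `gd(G)` agreeing with it on `G`, pad it with zeros again, and add the rank-one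
matrix back.

Lower bound: pad a psd matrix `X` on `V` to `(1, 0; 0, X)`. A psd matrix agreeing with this on
`∇G` has apex row `(1, 0, …, 0)`, so its apex column is not in the span of the other columns and
deleting the apex loses a unit of rank.
-/

/-- `Y` agrees with `X` on all diagonal entries and all entries indexed by edges of `G`. -/
def agreesOn {V : Type*} (G : SimpleGraph V) (X Y : Matrix V V ℝ) : Prop :=
  (∀ i, Y i i = X i i) ∧ ∀ i j, G.Adj i j → Y i j = X i j

/-- `gramDimLE G k` : every psd matrix indexed by `V` admits a psd matrix of rank at most `k`
agreeing with it on the diagonal and on the edges of `G`. -/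
def gramDimLE {V : Type*} [Fintype V] (G : SimpleGraph V) (k : ℕ) : Prop :=
  ∀ X : Matrix V V ℝ, X.PosSemidef →
    ∃ Y : Matrix V V ℝ, Y.PosSemidef ∧ Y.rank ≤ k ∧ agreesOn G X Y

/-- The Gram dimension of a graph. -/
noncomputable def gramDim {V : Type*} [Fintype V] (G : SimpleGraph V) : ℕ :=
  sInf {k | gramDimLE G k}

/-- The suspension `∇G` of `G`: a new apex node (`none`) adjacent to all nodes of `G`. -/
def suspension {V : Type*} (G : SimpleGraph V) : SimpleGraph (Option V) :=
  SimpleGraph.fromRel fun a b =>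
    a = none ∨ ∃ u v, a = some u ∧ b = some v ∧ G.Adj u v

open Matrix

namespace Matrix

variable {m n : Type*}

theorem rank_add_le {K : Type*} [Field K] [Fintype n] (A B : Matrix m n K) :
    (A + B).rank ≤ A.rank + B.rank := by
  rw [rank, rank, rank, mulVecLin_add]
  refine (Submodule.finrank_mono ?_).trans (Submodule.finrank_add_le_finrank_add_finrank _ _)
  rintro _ ⟨x, rfl⟩
  exact Submodule.add_mem_sup (LinearMap.mem_range_self _ x) (LinearMap.mem_range_self _ x)

theorem rank_submatrix_some_lt {K : Type*} [Field K] [Fintype n] (A : Matrix m (Option n) K)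
    {i : m} (hi : A i none ≠ 0) (h0 : ∀ j, A i (some j) = 0) :
    (A.submatrix id some).rank < A.rank := by
  rw [rank_eq_finrank_span_cols, rank_eq_finrank_span_cols]
  have := FiniteDimensional.span_of_finite K (Set.finite_range A.col)
  refine Submodule.finrank_lt_finrank_of_lt (SetLike.lt_iff_le_and_exists.2
    ⟨Submodule.span_mono ?_, A.col none, Submodule.subset_span ⟨none, rfl⟩, fun hmem => hi ?_⟩)
  · rintro _ ⟨j, rfl⟩
    exact ⟨some j, rfl⟩
  · have hker : Submodule.span K (Set.range (A.submatrix id some).col) ≤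
        LinearMap.ker (LinearMap.proj i) :=
      Submodule.span_le.2 (by rintro _ ⟨j, rfl⟩; simp [h0])
    simpa using hker hmem

theorem PosSemidef.apply_eq_zero_of_diag_eq_zero {X : Matrix n n ℝ} (hX : X.PosSemidef)
    {i : n} (hi : X i i = 0) (j : n) : X i j = 0 := by
  classical
  have hdet := (hX.submatrix ![i, j]).det_nonneg
  have hsymm : X j i = X i j := by simpa using hX.isHermitian.apply i j
  simp only [det_fin_two, submatrix_apply, cons_val_zero, cons_val_one, hi, hsymm] at hdet
  nlinarith [sq_nonneg (X i j)]

/-- Subtracting `X.pivotTerm i` from `X` is one step of symmetric Gaussian elimination on the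
entry `X i i`; when `X i i = 0` the junk value `0⁻¹ = 0` makes the term vanish. -/
noncomputable def pivotTerm (X : Matrix n n ℝ) (i : n) : Matrix n n ℝ :=
  (X i i)⁻¹ • vecMulVec (X i) (X i)

theorem posSemidef_pivotTerm [Finite n] {X : Matrix n n ℝ} (hX : X.PosSemidef) (i : n) :
    (X.pivotTerm i).PosSemidef :=
  (posSemidef_vecMulVec_self_star (X i)).smul (inv_nonneg.2 hX.diag_nonneg)

theorem rank_pivotTerm_le_one [Fintype n] (X : Matrix n n ℝ) (i : n) :
    (X.pivotTerm i).rank ≤ 1 := by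
  rw [pivotTerm, ← smul_vecMulVec]
  exact rank_vecMulVec_le _ _

theorem PosSemidef.sub_pivotTerm [Fintype n] {X : Matrix n n ℝ} (hX : X.PosSemidef) (i : n) :
    (X - X.pivotTerm i).PosSemidef := by
  classical
  have hinv : (X i i)⁻¹ * X i i * (X i i)⁻¹ = (X i i)⁻¹ := by
    simpa using mul_inv_mul_cancel (X i i)⁻¹
  convert hX.conjTranspose_mul_mul_same (1 - vecMulVec (Pi.single i 1) ((X i i)⁻¹ • X i)) using 1
  ext a b
  have hsymm : X a i = X i a := by simpa using hX.isHermitian.apply i a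
  simp only [pivotTerm, sub_apply, smul_apply, vecMulVec_apply, smul_eq_mul, vecMulVec_smul,
    conjTranspose_eq_transpose_of_trivial, transpose_sub, transpose_one, transpose_smul,
    transpose_vecMulVec, sub_mul, one_mul, Algebra.smul_mul_assoc, mul_apply, Pi.single_apply,
    mul_ite, mul_one, mul_zero, ite_mul, zero_mul, Finset.sum_ite_eq', Finset.mem_univ,
    if_true, one_apply, mul_sub, Finset.sum_sub_distrib, hsymm]
  linear_combination (-(X i a * X i b)) * hinv

theorem PosSemidef.sub_pivotTerm_apply_left [Fintype n] {X : Matrix n n ℝ} (hX : X.PosSemidef)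
    (i j : n) : (X - X.pivotTerm i) i j = 0 := by
  refine (hX.sub_pivotTerm i).apply_eq_zero_of_diag_eq_zero ?_ j
  simp [pivotTerm, vecMulVec_apply, ← mul_assoc]

theorem PosSemidef.sub_pivotTerm_apply_right [Fintype n] {X : Matrix n n ℝ} (hX : X.PosSemidef)
    (i j : n) : (X - X.pivotTerm i) j i = 0 := by
  simpa [hX.sub_pivotTerm_apply_left] using (hX.sub_pivotTerm i).isHermitian.apply i j

def padZero {R : Type*} [Zero R] (Z : Matrix n n R) : Matrix (Option n) (Option n) R :=
  of fun a b => Option.elim a 0 fun i => Option.elim b 0 (Z i)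

section padZero

variable {R : Type*} [Zero R] (Z : Matrix n n R)

@[simp]
theorem padZero_some_some (i j : n) : padZero Z (some i) (some j) = Z i j := rfl

@[simp]
theorem padZero_none_left (b : Option n) : padZero Z none b = 0 := rfl

@[simp]
theorem padZero_none_right (a : Option n) : padZero Z a none = 0 := by
  cases a <;> rfl

@[simp]
theorem submatrix_some_padZero : (padZero Z).submatrix some some = Z := rfl

end padZero

theorem padZero_eq_mul_mul_transpose {R : Type*} [Semiring R] [Fintype n] [DecidableEq n]
    (Z : Matrix n n R) :
    padZero Z = (1 : Matrix (Option n) (Option n) R).submatrix id some * Z *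
      ((1 : Matrix (Option n) (Option n) R).submatrix id some)ᵀ := by
  ext (_ | i) (_ | j) <;> simp [mul_apply, one_apply]

theorem PosSemidef.padZero [Fintype n] {Z : Matrix n n ℝ} (hZ : Z.PosSemidef) :
    (padZero Z).PosSemidef := by
  classical
  rw [padZero_eq_mul_mul_transpose, ← conjTranspose_eq_transpose_of_trivial]
  exact hZ.mul_mul_conjTranspose_same _

theorem rank_padZero_le {K : Type*} [Field K] [Fintype n] (Z : Matrix n n K) :
    (padZero Z).rank ≤ Z.rank := by
  classical
  rw [padZero_eq_mul_mul_transpose]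
  exact (rank_mul_le_left _ _).trans (rank_mul_le_right _ _)

end Matrix

section Suspension

variable {V : Type*} {G : SimpleGraph V}

theorem suspension_adj_none_some (j : V) : (suspension G).Adj none (some j) := by
  simp [suspension]

theorem suspension_adj_some_some {i j : V} :
    (suspension G).Adj (some i) (some j) ↔ G.Adj i j := by
  simp only [suspension, SimpleGraph.fromRel_adj, ne_eq, Option.some.injEq, reduceCtorEq,
    false_or, exists_and_left, exists_eq_left', G.adj_comm j i, or_self]
  exact and_iff_right_of_imp SimpleGraph.Adj.ne

theorem agreesOn.add_left {X Y : Matrix V V ℝ} (h : agreesOn G X Y) (R : Matrix V V ℝ) :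
    agreesOn G (R + X) (R + Y) :=
  ⟨fun i => by simp [h.1 i], fun i j hij => by simp [h.2 i j hij]⟩

theorem agreesOn_suspension_iff {X Y : Matrix (Option V) (Option V) ℝ} :
    agreesOn (suspension G) X Y ↔ Y none none = X none none ∧
      (∀ j, Y none (some j) = X none (some j) ∧ Y (some j) none = X (some j) none) ∧
      agreesOn G (X.submatrix some some) (Y.submatrix some some) := by
  constructor
  · rintro ⟨hdiag, hadj⟩
    exact ⟨hdiag none, fun j => ⟨hadj _ _ (suspension_adj_none_some j),
      hadj _ _ (suspension_adj_none_some j).symm⟩, fun i => hdiag (some i),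
      fun i j hij => hadj _ _ (suspension_adj_some_some.2 hij)⟩
  · rintro ⟨hnone, hapex, hdiag, hadj⟩
    refine ⟨fun a => ?_, fun a b hab => ?_⟩
    · cases a with
      | none => exact hnone
      | some i => exact hdiag i
    · rcases a with _ | i <;> rcases b with _ | j
      · exact absurd hab (SimpleGraph.irrefl _)
      · exact (hapex j).1
      · exact (hapex i).2
      · exact hadj i j (suspension_adj_some_some.1 hab)

end Suspension

section GramDimension

variable {V : Type*} [Fintype V] {G : SimpleGraph V} {k : ℕ}

theorem gramDimLE_card (G : SimpleGraph V) : gramDimLE G (Fintype.card V) := fun X hX =>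
  ⟨X, hX, X.rank_le_card_width, fun _ => rfl, fun _ _ _ => rfl⟩

theorem gramDimLE_suspension_succ (h : gramDimLE G k) : gramDimLE (suspension G) (k + 1) := by
  intro X hX
  set W := X - X.pivotTerm none
  obtain ⟨Z, hZ, hZrank, hWZ⟩ := h (W.submatrix some some) ((hX.sub_pivotTerm none).submatrix some)
  refine ⟨X.pivotTerm none + padZero Z, (posSemidef_pivotTerm hX none).add hZ.padZero, ?_, ?_⟩
  · calc (X.pivotTerm none + padZero Z).rank
        ≤ (X.pivotTerm none).rank + (padZero Z).rank := rank_add_le _ _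
      _ ≤ 1 + k := add_le_add (rank_pivotTerm_le_one X none) ((rank_padZero_le Z).trans hZrank)
      _ = k + 1 := add_comm 1 k
  · have hWZ' : agreesOn (suspension G) W (padZero Z) := agreesOn_suspension_iff.2
      ⟨by simp [W, hX.sub_pivotTerm_apply_left],
        fun j => by simp [W, hX.sub_pivotTerm_apply_left, hX.sub_pivotTerm_apply_right],
        by simpa using hWZ⟩
    simpa [W] using hWZ'.add_left (X.pivotTerm none)

theorem exists_agreesOn_rank_add_one_le (h : gramDimLE (suspension G) k)
    {X : Matrix V V ℝ} (hX : X.PosSemidef) :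
    ∃ Y : Matrix V V ℝ, Y.PosSemidef ∧ Y.rank + 1 ≤ k ∧ agreesOn G X Y := by
  classical
  set X' := vecMulVec (Pi.single none 1) (Pi.single none 1) + padZero X
  have hX' : X'.PosSemidef := by
    simpa using (posSemidef_vecMulVec_self_star (Pi.single none (1 : ℝ))).add hX.padZero
  have hX'V : X'.submatrix some some = X := by
    ext i j
    simp [X', vecMulVec_apply]
  obtain ⟨Y', hY', hrank, hagree⟩ := h X' hX'
  obtain ⟨hnone, hapex, hG⟩ := agreesOn_suspension_iff.1 hagree
  refine ⟨Y'.submatrix some some, hY'.submatrix some, ?_, hX'V ▸ hG⟩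
  have hlt : (Y'.submatrix some some).rank < Y'.rank :=
    (rank_submatrix_le (Y'.submatrix id some) some id).trans_lt
      (rank_submatrix_some_lt Y' (i := none) (by simp [hnone, X', vecMulVec_apply])
        fun j => by simp [(hapex j).1, X', vecMulVec_apply])
  omega

theorem gramDimLE_suspension_succ_iff : gramDimLE (suspension G) (k + 1) ↔ gramDimLE G k :=
  ⟨fun h X hX => (exists_agreesOn_rank_add_one_le h hX).imp fun _ ⟨hY, hrank, hXY⟩ =>
    ⟨hY, by omega, hXY⟩, gramDimLE_suspension_succ⟩

theorem not_gramDimLE_suspension_zero : ¬ gramDimLE (suspension G) 0 := fun h => by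
  obtain ⟨_, _, hrank, _⟩ := exists_agreesOn_rank_add_one_le h (PosSemidef.zero (n := V))
  omega

end GramDimension

/-- `gd(∇G) = gd(G) + 1`. -/
theorem gramDim_suspension {V : Type*} [Fintype V] (G : SimpleGraph V) :
    gramDim (suspension G) = gramDim G + 1 := by
  have hne : {k | gramDimLE (suspension G) k}.Nonempty :=
    ⟨_, gramDimLE_suspension_succ (gramDimLE_card G)⟩
  have hpos : 1 ≤ gramDim (suspension G) := Nat.one_le_iff_ne_zero.2 fun h0 =>
    (Nat.sInf_eq_zero.1 h0).elim not_gramDimLE_suspension_zero hne.ne_empty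
  rw [gramDim, gramDim, ← Nat.sInf_add hpos]
  simp only [gramDimLE_suspension_succ_iff]
end

section
/- For any graph G, ed(G) ≤ gd(G) − 1, where ed is the Euclidean dimension parameter and gd is the Gram dimension. -/
/-- `edDimLE G k` : every Euclidean realization (in any dimension) of a partial distance matrix
on the edges of `G` can be refolded into `ℝ^k`, i.e. `ed(G) ≤ k`. -/
def edDimLE {V : Type*} (G : SimpleGraph V) (k : ℕ) : Prop :=
  ∀ (m : ℕ) (p : V → EuclideanSpace ℝ (Fin m)),
    ∃ q : V → EuclideanSpace ℝ (Fin k),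
      ∀ u v, G.Adj u v → dist (q u) (q v) = dist (p u) (p v)

/-- The Euclidean dimension parameter `ed(G)`. -/
noncomputable def edDim {V : Type*} (G : SimpleGraph V) : ℕ :=
  sInf {k | edDimLE G k}

/-!
A Gram representation of `G` in `ℝ^k` is the same thing as a realization in `ℝ^k` of the
suspension `∇G` with its apex at the origin. So, given a realization `p` of `G`, the points
`(p i, t)` can be refolded into `ℝ^k` keeping their norms and the edge lengths of `G`. When
`t → ∞`, translate each connected component so that a root vertex goes to the origin: the
translated points stay bounded and become asymptotically orthogonal to the direction of the
root. By compactness, a limit is a realization of `G` in which every component lies in the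
hyperplane orthogonal to a nonzero vector, and such a realization fits in `ℝ^(k-1)`.
-/

open scoped RealInnerProductSpace
open Module Matrix Filter Topology Bornology

section

variable {V E F : Type*} [NormedAddCommGroup E] [InnerProductSpace ℝ E]
  [NormedAddCommGroup F] [InnerProductSpace ℝ F] {G : SimpleGraph V}

theorem exists_linearIsometry_of_finrank_le [FiniteDimensional ℝ E] [FiniteDimensional ℝ F]
    (h : finrank ℝ E ≤ finrank ℝ F) : Nonempty (E →ₗᵢ[ℝ] F) := by
  let b := stdOrthonormalBasis ℝ E
  have hb : Orthonormal ℝ b.toBasis := b.coe_toBasis.symm ▸ b.orthonormal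
  let c : Fin (finrank ℝ E) → F := stdOrthonormalBasis ℝ F ∘ Fin.castLE h
  have hc : Orthonormal ℝ c :=
    (stdOrthonormalBasis ℝ F).orthonormal.comp _ (Fin.castLE_injective h)
  refine ⟨(b.toBasis.constr ℝ c).isometryOfOrthonormal hb ?_⟩
  convert hc
  ext i
  simp

theorem Submodule.exists_linearMap_norm_eq_of_finrank_le [FiniteDimensional ℝ E]
    [FiniteDimensional ℝ F] (K : Submodule ℝ E) (h : finrank ℝ K ≤ finrank ℝ F) :
    ∃ f : E →ₗ[ℝ] F, ∀ x ∈ K, ‖f x‖ = ‖x‖ := by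
  obtain ⟨ι⟩ := exists_linearIsometry_of_finrank_le h
  refine ⟨ι.toLinearMap ∘ₗ K.orthogonalProjectionOnto.toLinearMap, fun x hx => ?_⟩
  simp [K.orthogonalProjectionOnto_mem_subspace_eq_self ⟨x, hx⟩]

theorem exists_inner_eq_of_finrank_span_le [FiniteDimensional ℝ E] {ι : Type*} {c : ι → E}
    {k : ℕ} (h : finrank ℝ (Submodule.span ℝ (Set.range c)) ≤ k) :
    ∃ a : ι → EuclideanSpace ℝ (Fin k), ∀ i j, ⟪a i, a j⟫ = ⟪c i, c j⟫ := by
  obtain ⟨f⟩ := exists_linearIsometry_of_finrank_le (h.trans_eq finrank_euclideanSpace_fin.symm)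
  exact ⟨fun i => f ⟨c i, Submodule.subset_span ⟨i, rfl⟩⟩, fun i j => f.inner_map_map _ _⟩

theorem real_inner_inv_smul_sub {x y : F} {α β t : ℝ} (ht : t ≠ 0)
    (hx : ‖x‖ ^ 2 = α + t ^ 2) (hy : ‖y‖ ^ 2 = β + t ^ 2) :
    ⟪t⁻¹ • y, x - y⟫ = (α - β - ‖x - y‖ ^ 2) / (2 * t) := by
  rw [real_inner_smul_left, inner_sub_right, real_inner_self_eq_norm_sq, norm_sub_sq_real,
    real_inner_comm]
  field_simp
  linarith

theorem norm_inv_smul_mem_Icc {y : F} {s t : ℝ} (hs : 0 ≤ s) (ht : 1 ≤ t)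
    (hy : ‖y‖ ^ 2 = s ^ 2 + t ^ 2) : ‖t⁻¹ • y‖ ∈ Set.Icc 1 (1 + s) := by
  have ht0 : 0 < t := one_pos.trans_le ht
  rw [norm_smul, norm_inv, Real.norm_of_nonneg ht0.le, ← div_eq_inv_mul, Set.mem_Icc,
    one_le_div ht0, div_le_iff₀ ht0, ← pow_le_pow_iff_left₀ ht0.le (norm_nonneg y) two_ne_zero,
    ← pow_le_pow_iff_left₀ (norm_nonneg y) (by positivity) two_ne_zero, hy]
  have ht2 : 1 ≤ t ^ 2 := one_le_pow₀ ht
  constructor <;> nlinarith [mul_le_mul_of_nonneg_left ht2 (by positivity : 0 ≤ 2 * s + s ^ 2)]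

theorem tendsto_inner_inv_smul_sub {x y : ℕ → F} {α β C : ℝ}
    (hx : ∀ n, ‖x n‖ ^ 2 = α + ((n : ℝ) + 1) ^ 2) (hy : ∀ n, ‖y n‖ ^ 2 = β + ((n : ℝ) + 1) ^ 2)
    (hC : ∀ n, ‖x n - y n‖ ≤ C) :
    Tendsto (fun n : ℕ => ⟪((n : ℝ) + 1)⁻¹ • y n, x n - y n⟫) atTop (𝓝 0) := by
  have hbound : ∀ n : ℕ, ‖⟪((n : ℝ) + 1)⁻¹ • y n, x n - y n⟫‖ ≤
      (|α - β| + C ^ 2) * (1 / ((n : ℝ) + 1)) := by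
    intro n
    have hn : (0 : ℝ) < n + 1 := by positivity
    have hxy : ‖x n - y n‖ ^ 2 ≤ C ^ 2 := pow_le_pow_left₀ (norm_nonneg _) (hC n) 2
    have hαβ := abs_sub (α - β) (‖x n - y n‖ ^ 2)
    rw [abs_of_nonneg (sq_nonneg ‖x n - y n‖)] at hαβ
    rw [real_inner_inv_smul_sub hn.ne' (hx n) (hy n), Real.norm_eq_abs, abs_div,
      abs_of_pos (by positivity : (0 : ℝ) < 2 * (n + 1)), div_le_iff₀ (by positivity)]
    field_simp
    nlinarith [abs_nonneg (α - β)]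
  have hlim := tendsto_one_div_add_atTop_nhds_zero_nat.const_mul (|α - β| + C ^ 2)
  rw [mul_zero] at hlim
  exact squeeze_zero_norm hbound hlim

theorem IsClosed.exists_mem_apply_eq_of_tendsto {X Y : Type*} [PseudoMetricSpace X]
    [ProperSpace X] [TopologicalSpace Y] [T2Space Y] {S : Set X} (hS : IsClosed S) {f : X → Y}
    (hf : Continuous f) {x : ℕ → X} (hxS : ∀ n, x n ∈ S) (hx : IsBounded (Set.range x))
    {c : Y} (hfx : Tendsto (f ∘ x) atTop (𝓝 c)) : ∃ y ∈ S, f y = c := by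
  obtain ⟨y, -, φ, hφ, hy⟩ := tendsto_subseq_of_bounded hx (Set.mem_range_self ·)
  refine ⟨y, hS.mem_of_tendsto hy (.of_forall fun n => hxS _), ?_⟩
  exact tendsto_nhds_unique ((hf.tendsto y).comp hy) (hfx.comp hφ.tendsto_atTop)

open scoped MatrixOrder in
theorem Matrix.PosSemidef.exists_inner_eq_of_rank_le [Fintype V]
    {Y : Matrix V V ℝ} (hY : Y.PosSemidef) {k : ℕ} (hk : Y.rank ≤ k) :
    ∃ a : V → EuclideanSpace ℝ (Fin k), ∀ i j, ⟪a i, a j⟫ = Y i j := by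
  classical
  set S := CFC.sqrt Y
  have hS : S * Sᵀ = Y := by
    rw [← conjTranspose_eq_transpose_of_trivial, (CFC.sqrt_nonneg Y).posSemidef.1.eq,
      CFC.sqrt_mul_sqrt_self Y hY.nonneg]
  let rows : V → EuclideanSpace ℝ V := fun i => WithLp.toLp 2 (S.row i)
  have hrows : Set.range rows = (WithLp.linearEquiv 2 ℝ (V → ℝ)).symm '' Set.range S.row :=
    Set.range_comp _ _
  have hrank : finrank ℝ (Submodule.span ℝ (Set.range rows)) = Y.rank := by
    rw [← hS, rank_self_mul_transpose, rank_eq_finrank_span_row, hrows,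
      Submodule.span_image_linearEquiv, LinearEquiv.finrank_map_eq]
  obtain ⟨a, ha⟩ := exists_inner_eq_of_finrank_span_le (hrank.trans_le hk)
  refine ⟨a, fun i j => ?_⟩
  rw [ha, ← hS]
  simp [rows, PiLp.inner_apply, mul_apply, mul_comm]

theorem gramDimLE_gramDim [Fintype V] : gramDimLE G (gramDim G) :=
  Nat.sInf_mem (s := {k | gramDimLE G k}) ⟨Fintype.card V, fun X hX =>
    ⟨X, hX, X.rank_le_card_width, fun _ => rfl, fun _ _ _ => rfl⟩⟩

theorem gramDimLE.exists_norm_eq_and_dist_eq [Fintype V] {k : ℕ} (hG : gramDimLE G k)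
    (v : V → E) :
    ∃ a : V → EuclideanSpace ℝ (Fin k), (∀ i, ‖a i‖ = ‖v i‖) ∧
      ∀ i j, G.Adj i j → dist (a i) (a j) = dist (v i) (v j) := by
  obtain ⟨Y, hY, hrank, hdiag, hadj⟩ := hG _ (posSemidef_gram ℝ v)
  obtain ⟨a, ha⟩ := hY.exists_inner_eq_of_rank_le hrank
  have hnorm : ∀ i, ‖a i‖ = ‖v i‖ := fun i => by
    rw [norm_eq_sqrt_real_inner, norm_eq_sqrt_real_inner, ha, hdiag, gram_apply]
  refine ⟨a, hnorm, fun i j hij => ?_⟩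
  rw [dist_eq_norm, dist_eq_norm, ← sq_eq_sq₀ (norm_nonneg _) (norm_nonneg _), norm_sub_sq_real,
    norm_sub_sq_real, hnorm, hnorm, ha, hadj i j hij, gram_apply]

theorem gramDimLE.exists_norm_sq_eq_add_sq [Fintype V] {k : ℕ} (hG : gramDimLE G k)
    (p : V → E) (t : ℝ) :
    ∃ a : V → EuclideanSpace ℝ (Fin k), (∀ i, ‖a i‖ ^ 2 = ‖p i‖ ^ 2 + t ^ 2) ∧
      ∀ i j, G.Adj i j → dist (a i) (a j) = dist (p i) (p j) := by
  obtain ⟨a, hnorm, hdist⟩ := hG.exists_norm_eq_and_dist_eq fun i => WithLp.toLp 2 (p i, t)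
  refine ⟨a, fun i => ?_, fun i j hij => ?_⟩
  · rw [hnorm, WithLp.prod_norm_sq_eq_of_L2]
    simp
  · rw [hdist i j hij, WithLp.prod_dist_eq_of_L2]
    simp

theorem exists_forall_dist_le_of_reachable {ι X : Type*} [PseudoMetricSpace X]
    {a : ι → V → X} (hadj : ∀ u v, G.Adj u v → ∃ C, ∀ n, dist (a n u) (a n v) ≤ C) {u v : V}
    (h : G.Reachable u v) : ∃ C, ∀ n, dist (a n u) (a n v) ≤ C := by
  rw [SimpleGraph.reachable_iff_reflTransGen] at h
  induction h with
  | refl => exact ⟨0, fun n => (dist_self (a n _)).le⟩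
  | tail _ hvw ih =>
    obtain ⟨C₁, hC₁⟩ := ih
    obtain ⟨C₂, hC₂⟩ := hadj _ _ hvw
    exact ⟨C₁ + C₂, fun n => (dist_triangle _ _ _).trans (add_le_add (hC₁ n) (hC₂ n))⟩

theorem exists_root_forall_dist_le {ι X : Type*} [PseudoMetricSpace X] {a : ι → V → X}
    (hadj : ∀ u v, G.Adj u v → ∃ C, ∀ n, dist (a n u) (a n v) ≤ C) :
    ∃ r : V → V, (∀ i j, G.Adj i j → r i = r j) ∧ ∀ i, ∃ C, ∀ n, dist (a n i) (a n (r i)) ≤ C :=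
  ⟨fun i => (G.connectedComponentMk i).out,
    fun i j h => by simp only [SimpleGraph.ConnectedComponent.connectedComponentMk_eq_of_adj h],
    fun i => exists_forall_dist_le_of_reachable hadj
      (SimpleGraph.ConnectedComponent.exact (Quot.out_eq _)).symm⟩

theorem exists_orthogonal_realization {X : Type*} [SeminormedAddCommGroup X] [Fintype V]
    [FiniteDimensional ℝ F] (p : V → X)
    (hlift : ∀ t : ℝ, ∃ a : V → F, (∀ i, ‖a i‖ ^ 2 = ‖p i‖ ^ 2 + t ^ 2) ∧
      ∀ i j, G.Adj i j → dist (a i) (a j) = dist (p i) (p j)) :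
    ∃ w U : V → F, (∀ i j, G.Adj i j → dist (w i) (w j) = dist (p i) (p j)) ∧
      (∀ i j, G.Adj i j → U i = U j) ∧ (∀ i, U i ≠ 0) ∧ ∀ i, ⟪U i, w i⟫ = 0 := by
  choose a ha_norm ha_dist using fun n : ℕ => hlift (n + 1)
  obtain ⟨r, hr_adj, hr⟩ := exists_root_forall_dist_le fun i j h =>
    ⟨_, fun n => (ha_dist n i j h).le⟩
  choose C hC using hr
  let b : ℕ → V → F := fun n i => a n i - a n (r i)
  let u : ℕ → V → F := fun n i => ((n : ℝ) + 1)⁻¹ • a n (r i)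
  have hb : ∀ n i, ‖b n i‖ ≤ C i := fun n i => (dist_eq_norm _ _).symm.trans_le (hC i n)
  have hu : ∀ n i, ‖u n i‖ ∈ Set.Icc 1 (1 + ‖p (r i)‖) := fun n i =>
    norm_inv_smul_mem_Icc (norm_nonneg _) (by simp) (ha_norm n (r i))
  have hinner : ∀ i, Tendsto (fun n => ⟪u n i, b n i⟫) atTop (𝓝 0) := fun i =>
    tendsto_inner_inv_smul_sub (ha_norm · i) (ha_norm · (r i)) (hb · i)
  let S : Set (V → F × F) := {z | (∀ i j, G.Adj i j → dist (z i).1 (z j).1 = dist (p i) (p j)) ∧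
    (∀ i j, G.Adj i j → (z i).2 = (z j).2) ∧ ∀ i, 1 ≤ ‖(z i).2‖}
  have hS : IsClosed S := by
    simp only [S, Set.ofPred_and, Set.ofPred_forall]
    refine .inter ?_ (.inter ?_ ?_) <;> refine isClosed_iInter fun i => ?_
    all_goals first
      | exact isClosed_le (by fun_prop) (by fun_prop)
      | exact isClosed_iInter fun j => isClosed_iInter fun _ =>
          isClosed_eq (by fun_prop) (by fun_prop)
  have hmem : ∀ n, (fun i => (b n i, u n i)) ∈ S := by
    refine fun n => ⟨fun i j h => ?_, fun i j h => by simp only [u, hr_adj i j h],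
      fun i => (hu n i).1⟩
    simp only [b, hr_adj i j h, dist_sub_right, ha_dist n i j h]
  have hbdd : IsBounded (Set.range fun n i => (b n i, u n i)) := by
    refine (IsBounded.pi fun i => (Metric.isBounded_closedBall (x := (0 : F)) (r := C i)).prod
      (Metric.isBounded_closedBall (x := 0) (r := 1 + ‖p (r i)‖))).subset ?_
    rintro _ ⟨n, rfl⟩ i -
    exact ⟨mem_closedBall_zero_iff.2 (hb n i), mem_closedBall_zero_iff.2 (hu n i).2⟩
  obtain ⟨z, ⟨hz_dist, hz_adj, hz_norm⟩, hz⟩ := hS.exists_mem_apply_eq_of_tendsto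
    (f := fun z i => ⟪(z i).2, (z i).1⟫) (by fun_prop) hmem hbdd (tendsto_pi_nhds.2 hinner)
  exact ⟨fun i => (z i).1, fun i => (z i).2, hz_dist, hz_adj,
    fun i => norm_pos_iff.1 (one_pos.trans_le (hz_norm i)), fun i => congrFun hz i⟩

theorem exists_linearMap_norm_eq_of_inner_eq_zero [FiniteDimensional ℝ F] {n : ℕ}
    (hF : finrank ℝ F = n) {u : F} (hu : u ≠ 0) :
    ∃ f : F →ₗ[ℝ] EuclideanSpace ℝ (Fin (n - 1)), ∀ x, ⟪u, x⟫ = 0 → ‖f x‖ = ‖x‖ := by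
  have hK : finrank ℝ (ℝ ∙ u)ᗮ = n - 1 := by
    have := (ℝ ∙ u).finrank_add_finrank_orthogonal
    rw [finrank_span_singleton hu, hF] at this
    omega
  obtain ⟨f, hf⟩ := (ℝ ∙ u)ᗮ.exists_linearMap_norm_eq_of_finrank_le
    (F := EuclideanSpace ℝ (Fin (n - 1))) (by rw [hK, finrank_euclideanSpace_fin])
  exact ⟨f, fun x hx => hf x (Submodule.mem_orthogonal_singleton_iff_inner_right.2 hx)⟩

theorem exists_dist_eq_of_inner_eq_zero [FiniteDimensional ℝ F] {n : ℕ} (hF : finrank ℝ F = n)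
    {w U : V → F} (hU : ∀ i, U i ≠ 0) (hUadj : ∀ i j, G.Adj i j → U i = U j)
    (hUw : ∀ i, ⟪U i, w i⟫ = 0) :
    ∃ q : V → EuclideanSpace ℝ (Fin (n - 1)),
      ∀ i j, G.Adj i j → dist (q i) (q j) = dist (w i) (w j) := by
  have hfold : ∀ u : F, ∃ f : F →ₗ[ℝ] EuclideanSpace ℝ (Fin (n - 1)),
      u ≠ 0 → ∀ x, ⟪u, x⟫ = 0 → ‖f x‖ = ‖x‖ := fun u => by
    by_cases hu : u = 0
    · exact ⟨0, fun h => (h hu).elim⟩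
    · obtain ⟨f, hf⟩ := exists_linearMap_norm_eq_of_inner_eq_zero hF hu
      exact ⟨f, fun _ => hf⟩
  choose f hf using hfold
  refine ⟨fun i => f (U i) (w i), fun i j hij => ?_⟩
  have hUwj : ⟪U i, w j⟫ = 0 := hUadj i j hij ▸ hUw j
  dsimp only
  rw [← hUadj i j hij, dist_eq_norm, dist_eq_norm, ← map_sub,
    hf _ (hU i) _ (by rw [inner_sub_right, hUw, hUwj, sub_zero])]
end

/-- For any graph `G`, `ed(G) ≤ gd(G) − 1`. -/
theorem edDim_le_gramDim_sub_one {V : Type*} [Fintype V] (G : SimpleGraph V) :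
    edDim G ≤ gramDim G - 1 := by
  refine Nat.sInf_le fun m p => ?_
  obtain ⟨w, U, hw, hUadj, hU, hUw⟩ :=
    exists_orthogonal_realization p (gramDimLE_gramDim.exists_norm_sq_eq_add_sq p)
  obtain ⟨q, hq⟩ := exists_dist_eq_of_inner_eq_zero finrank_euclideanSpace_fin hU hUadj hUw
  exact ⟨q, fun i j hij => (hq i j hij).trans (hw i j hij)⟩
end
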